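/- arXiv:1306.2035 — 4 statements merged into one kernel-verified Lean document; each statement's English description precedes it below -/
import Mathlib

section
/- Define h(u) = (√(1+u²) - 1) + log(1 - (1/u²)(√(1+u²) - 1)²) for u > 0. Then h(u) ≥ (u/5)·min(1, u) for all u > 0. -/
/-- For `h(u) = (√(1+u²) - 1) + log(1 - (1/u²)(√(1+u²) - 1)²)`,
we have `h(u) ≥ (u/5)·min(1,u)` for all `u > 0`. -/
theorem chernoff_exponent_bound (u : ℝ) (hu : 0 < u) :
    u / 5 * min 1 u
      ≤ (Real.sqrt (1 + u ^ 2) - 1)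
        + Real.log (1 - (1 / u ^ 2) * (Real.sqrt (1 + u ^ 2) - 1) ^ 2) := by
  set s := Real.sqrt (1 + u ^ 2) with hs
  have hs2 : s ^ 2 = 1 + u ^ 2 := Real.sq_sqrt (by positivity)
  have hsnn : 0 ≤ s := Real.sqrt_nonneg _
  have hs1 : 1 < s := by nlinarith
  have harg : 1 - (1 / u ^ 2) * (s - 1) ^ 2 = 2 / (s + 1) := by
    have hu2 : u ^ 2 = (s - 1) * (s + 1) := by nlinarith
    field_simp
    nlinarith
  rw [harg]
  have hlog : -((s - 1) / 2) ≤ Real.log (2 / (s + 1)) := by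
    rw [show (2:ℝ) / (s + 1) = ((s + 1) / 2)⁻¹ by field_simp, Real.log_inv]
    have := Real.log_le_sub_one_of_pos (show (0:ℝ) < (s + 1) / 2 by linarith)
    linarith
  rcases le_total 1 u with h1 | h1
  · rw [min_eq_left h1]
    nlinarith [sq_nonneg (5 * s - 2 * u - 5)]
  · rw [min_eq_right h1]
    have hle : s ≤ 3 / 2 := by nlinarith
    nlinarith [mul_pos hu hu]
end

section
/- Let X_1, Y_1, ..., X_n, Y_n be i.i.d. standard Gaussians. Then for any ε > 0, P(|(1/n)∑_{i=1}^n X_i Y_i| > ε/2) ≤ 2·exp(-n·ε·min(1,ε)/10). -/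
open MeasureTheory ProbabilityTheory Real

/-!
Chernoff's method. Integrating out `Y` first, `E[e^{tXY}] = E[e^{t²X²/2}] = (1 - t²)^{-1/2}` for
`|t| < 1`, so `S = ∑ Xᵢ Yᵢ` has moment generating function `(1 - t²)^{-n/2}`, which is even in `t`;
hence `P(|S| ≥ a) ≤ 2 e^{-ta} (1 - t²)^{-n/2}`. For `v = √(1 + ε²) - 1` and `t = v / ε` one has
`(1 - t²)⁻¹ = 1 + v/2 ≤ e^{v/2}`, so with `a = nε/2` each coordinate contributes at most
`e^{-v/2 + v/4} = e^{-v/4}`, and `v ≥ 2ε min(1, ε)/5`.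
-/

theorem mgf_sq_gaussianReal {c : ℝ} (hc : c < 1 / 2) :
    mgf (fun x ↦ x ^ 2) (gaussianReal 0 1) c = (√(1 - 2 * c))⁻¹ := by
  have hb : 0 < 1 / 2 - c := by linarith
  have h_density : ∀ x, gaussianPDFReal 0 1 x • rexp (c * x ^ 2)
      = (√(2 * π))⁻¹ * rexp (-(1 / 2 - c) * x ^ 2) := by
    intro x
    simp only [gaussianPDFReal, NNReal.coe_one, mul_one, sub_zero, smul_eq_mul, mul_assoc,
      ← Real.exp_add]
    ring_nf
  rw [mgf, integral_gaussianReal_eq_integral_smul one_ne_zero]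
  simp_rw [h_density]
  rw [integral_const_mul, integral_gaussian, ← Real.sqrt_inv, ← Real.sqrt_inv,
    ← Real.sqrt_mul (by positivity)]
  congr 1
  field_simp

theorem integral_exp_mul_mul_gaussianReal (t x : ℝ) :
    ∫ y, rexp (t * (x * y)) ∂gaussianReal 0 1 = rexp (t ^ 2 / 2 * x ^ 2) := by
  have := congrFun (mgf_fun_id_gaussianReal (μ := 0) (v := 1)) (t * x)
  simp only [mgf, mul_assoc] at this
  rw [this]
  push_cast
  ring_nf

theorem integrable_exp_mul_mul_gaussianReal_prod {t : ℝ} (ht : t ^ 2 < 1) :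
    Integrable (fun p : ℝ × ℝ ↦ rexp (t * (p.1 * p.2)))
      ((gaussianReal 0 1).prod (gaussianReal 0 1)) := by
  refine (integrable_prod_iff (by fun_prop)).2 ⟨.of_forall fun x ↦ ?_, ?_⟩
  · simpa only [mul_assoc] using integrable_exp_mul_gaussianReal (μ := 0) (v := 1) (t * x)
  · simp only [Real.norm_eq_abs, abs_of_pos (Real.exp_pos _), integral_exp_mul_mul_gaussianReal]
    rw [← mgf_pos_iff, mgf_sq_gaussianReal (by linarith)]
    exact inv_pos.2 (Real.sqrt_pos.2 (by linarith))

theorem mgf_mul_gaussianReal_prod {t : ℝ} (ht : t ^ 2 < 1) :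
    mgf (fun p : ℝ × ℝ ↦ p.1 * p.2) ((gaussianReal 0 1).prod (gaussianReal 0 1)) t
      = (√(1 - t ^ 2))⁻¹ := by
  rw [mgf, integral_prod _ (integrable_exp_mul_mul_gaussianReal_prod ht)]
  simp only [integral_exp_mul_mul_gaussianReal]
  exact (mgf_sq_gaussianReal (by linarith)).trans (by ring_nf)

section Pi

variable {ι E : Type*} [Fintype ι] [MeasurableSpace E] {μ : Measure E} {f : E → ℝ} {t : ℝ}

theorem mgf_sum_pi [SigmaFinite μ] :
    mgf (fun ω : ι → E ↦ ∑ i, f (ω i)) (Measure.pi fun _ ↦ μ) t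
      = mgf f μ t ^ Fintype.card ι := by
  simp only [mgf, Finset.mul_sum, Real.exp_sum]
  exact integral_fintype_prod_eq_pow (fun x ↦ rexp (t * f x))

theorem integrable_exp_mul_sum_pi [SigmaFinite μ] (hf : Integrable (fun x ↦ rexp (t * f x)) μ) :
    Integrable (fun ω : ι → E ↦ rexp (t * ∑ i, f (ω i))) (Measure.pi fun _ ↦ μ) := by
  simp only [Finset.mul_sum, Real.exp_sum]
  exact Integrable.fintype_prod fun _ ↦ hf

end Pi

theorem measureReal_le_abs_le_exp_mul_mgf {Ω : Type*} [MeasurableSpace Ω] {μ : Measure Ω}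
    [IsFiniteMeasure μ] {X : Ω → ℝ} {t : ℝ} (a : ℝ) (ht : 0 ≤ t)
    (h_int : Integrable (fun ω ↦ rexp (t * X ω)) μ)
    (h_int_neg : Integrable (fun ω ↦ rexp (-t * X ω)) μ) :
    μ.real {ω | a ≤ |X ω|} ≤ rexp (-t * a) * (mgf X μ t + mgf X μ (-t)) := by
  have h_union : {ω | a ≤ |X ω|} = {ω | a ≤ X ω} ∪ {ω | X ω ≤ -a} := by
    ext ω
    simp only [Set.mem_ofPred_eq, Set.mem_union, le_abs', or_comm]
  calc μ.real {ω | a ≤ |X ω|}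
      ≤ μ.real {ω | a ≤ X ω} + μ.real {ω | X ω ≤ -a} := h_union ▸ measureReal_union_le _ _
    _ ≤ rexp (-t * a) * mgf X μ t + rexp (- -t * -a) * mgf X μ (-t) :=
        add_le_add (measure_ge_le_exp_mul_mgf a ht h_int)
          (measure_le_le_exp_mul_mgf (-a) (neg_nonpos.2 ht) h_int_neg)
    _ = rexp (-t * a) * (mgf X μ t + mgf X μ (-t)) := by ring_nf

theorem measureReal_le_abs_sum_mul_le {ι : Type*} [Fintype ι] {t : ℝ} (ht0 : 0 ≤ t)
    (ht1 : t ^ 2 < 1) (a : ℝ) :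
    (Measure.pi fun _ : ι ↦ (gaussianReal 0 1).prod (gaussianReal 0 1)).real
        {ω | a ≤ |∑ i, (ω i).1 * (ω i).2|}
      ≤ 2 * rexp (-t * a) * (√(1 - t ^ 2))⁻¹ ^ Fintype.card ι := by
  let f : ℝ × ℝ → ℝ := fun p ↦ p.1 * p.2
  have h_int (s : ℝ) (hs : s ^ 2 < 1) :=
    integrable_exp_mul_sum_pi (ι := ι) (f := f) (integrable_exp_mul_mul_gaussianReal_prod hs)
  have h_mgf (s : ℝ) (hs : s ^ 2 < 1) :
      mgf (fun ω : ι → ℝ × ℝ ↦ ∑ i, f (ω i))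
          (Measure.pi fun _ ↦ (gaussianReal 0 1).prod (gaussianReal 0 1)) s
        = (√(1 - s ^ 2))⁻¹ ^ Fintype.card ι := by
    rw [mgf_sum_pi, mgf_mul_gaussianReal_prod hs]
  have ht1' : (-t) ^ 2 < 1 := by rwa [neg_sq]
  refine (measureReal_le_abs_le_exp_mul_mgf a ht0 (h_int t ht1) (h_int (-t) ht1')).trans_eq ?_
  rw [h_mgf t ht1, h_mgf (-t) ht1', neg_sq]
  ring

theorem two_mul_mul_min_div_five_le_sqrt_one_add_sq_sub_one {ε : ℝ} (hε : 0 ≤ ε) :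
    2 * ε * min 1 ε / 5 ≤ √(1 + ε ^ 2) - 1 := by
  set v := √(1 + ε ^ 2) - 1
  have hv : v ^ 2 + 2 * v = ε ^ 2 := by
    linear_combination Real.sq_sqrt (show 0 ≤ 1 + ε ^ 2 by positivity)
  have hv0 : 0 ≤ v := by
    simpa [v] using Real.one_le_sqrt.2 (by nlinarith : (1 : ℝ) ≤ 1 + ε ^ 2)
  rcases le_total ε 1 with h | h
  · rw [min_eq_right h]
    have hv_half : v ≤ 1 / 2 := by nlinarith
    nlinarith
  · rw [min_eq_left h]
    nlinarith

theorem exists_exp_neg_mul_mul_inv_sqrt_one_sub_sq_le {ε : ℝ} (hε : 0 < ε) :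
    ∃ t, 0 ≤ t ∧ t ^ 2 < 1 ∧
      rexp (-t * (ε / 2)) * (√(1 - t ^ 2))⁻¹ ≤ rexp (-(ε * min 1 ε) / 10) := by
  obtain ⟨v, hv, h_min⟩ : ∃ v, v ^ 2 + 2 * v = ε ^ 2 ∧ 2 * ε * min 1 ε / 5 ≤ v :=
    ⟨√(1 + ε ^ 2) - 1, by linear_combination Real.sq_sqrt (show 0 ≤ 1 + ε ^ 2 by positivity),
      two_mul_mul_min_div_five_le_sqrt_one_add_sq_sub_one hε.le⟩
  have hv0 : 0 < v := lt_of_lt_of_le (by positivity) h_min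
  have h_one_sub : 1 - (v / ε) ^ 2 = (1 + v / 2)⁻¹ := by
    field_simp
    linear_combination (-v) * hv
  refine ⟨v / ε, by positivity, ?_, ?_⟩
  · have : 0 < 1 - (v / ε) ^ 2 := h_one_sub ▸ by positivity
    linarith
  calc rexp (-(v / ε) * (ε / 2)) * (√(1 - (v / ε) ^ 2))⁻¹
      = rexp (-(v / 2)) * √(1 + v / 2) := by
        rw [h_one_sub, Real.sqrt_inv, inv_inv]
        field_simp
    _ ≤ rexp (-(v / 2)) * rexp (v / 4) := by
        gcongr
        rw [Real.sqrt_le_iff, ← Real.exp_nat_mul]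
        refine ⟨by positivity, ?_⟩
        linarith [Real.add_one_le_exp (2 * (v / 4))]
    _ ≤ rexp (-(ε * min 1 ε) / 10) := by
        rw [← Real.exp_add, Real.exp_le_exp]
        linarith

theorem mul_le_abs_of_lt_abs_one_div_mul {a s : ℝ} (n : ℕ) (h : a < |(1 / n : ℝ) * s|) :
    n * a ≤ |s| := by
  rcases eq_or_ne (n : ℝ) 0 with hn | hn
  · rw [hn, zero_mul]
    exact abs_nonneg s
  · rw [abs_mul, abs_one_div, Nat.abs_cast, one_div_mul_eq_div, lt_div_iff₀ (by positivity)] at h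
    linarith

theorem prod_gaussian_mean_tail_general (n : ℕ) (ε : ℝ) (hε : 0 < ε) :
    (Measure.pi fun _ : Fin n => (gaussianReal 0 1).prod (gaussianReal 0 1))
      {ω | ε / 2 < |(1 / n : ℝ) * ∑ i, (ω i).1 * (ω i).2|}
    ≤ ENNReal.ofReal (2 * Real.exp (-(n * ε * min 1 ε) / 10)) := by
  set μ := Measure.pi fun _ : Fin n => (gaussianReal 0 1).prod (gaussianReal 0 1)
  set S := fun ω : Fin n → ℝ × ℝ ↦ ∑ i, (ω i).1 * (ω i).2
  obtain ⟨t, ht0, ht1, h_bound⟩ := exists_exp_neg_mul_mul_inv_sqrt_one_sub_sq_le hε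
  have h_tail : μ.real {ω | n * ε / 2 ≤ |S ω|} ≤ 2 * rexp (-(n * ε * min 1 ε) / 10) :=
    calc μ.real {ω | n * ε / 2 ≤ |S ω|}
        ≤ 2 * rexp (-t * (n * ε / 2)) * (√(1 - t ^ 2))⁻¹ ^ n := by
          simpa only [Fintype.card_fin] using
            measureReal_le_abs_sum_mul_le (ι := Fin n) ht0 ht1 (n * ε / 2)
      _ = 2 * (rexp (-t * (ε / 2)) * (√(1 - t ^ 2))⁻¹) ^ n := by
          rw [mul_pow, ← Real.exp_nat_mul]
          ring_nf
      _ ≤ 2 * rexp (-(ε * min 1 ε) / 10) ^ n := by gcongr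
      _ = 2 * rexp (-(n * ε * min 1 ε) / 10) := by
          rw [← Real.exp_nat_mul]
          ring_nf
  have h_subset : {ω | ε / 2 < |(1 / n : ℝ) * S ω|} ⊆ {ω | n * ε / 2 ≤ |S ω|} :=
    fun ω hω ↦ (mul_div_assoc (n : ℝ) ε 2).symm ▸ mul_le_abs_of_lt_abs_one_div_mul n hω
  calc μ {ω | ε / 2 < |(1 / n : ℝ) * S ω|}
      ≤ μ {ω | n * ε / 2 ≤ |S ω|} := measure_mono h_subset
    _ = ENNReal.ofReal (μ.real {ω | n * ε / 2 ≤ |S ω|}) := (ofReal_measureReal).symm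
    _ ≤ ENNReal.ofReal (2 * rexp (-(n * ε * min 1 ε) / 10)) := ENNReal.ofReal_le_ofReal h_tail

/-- If `X_1, Y_1, ..., X_n, Y_n` are i.i.d. standard Gaussians, then for any `ε > 0`,
`P(|(1/n) ∑ X_i Y_i| > ε/2) ≤ 2 exp(-n ε min(1,ε)/10)`. -/
theorem prod_gaussian_mean_tail (n : ℕ) (hn : 0 < n) (ε : ℝ) (hε : 0 < ε) :
    (Measure.pi fun _ : Fin n => (gaussianReal 0 1).prod (gaussianReal 0 1))
      {ω | ε / 2 < |(1 / n : ℝ) * ∑ i, (ω i).1 * (ω i).2|}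
    ≤ ENNReal.ofReal (2 * Real.exp (-(n * ε * min 1 ε) / 10)) :=
  prod_gaussian_mean_tail_general n ε hε
end

section
/- Let Ω = {ω ∈ {0,1}^m : ‖ω‖_0 = s} for integers m > s ≥ 1 with s ≤ m/4. There exist ω_0, ..., ω_M ∈ Ω such that the Hamming distance ρ(ω_i, ω_j) > s/2 for all 0 ≤ i < j ≤ M, and log(M+1) ≥ (s/5)·log(m/s). -/
open Finset

/-! ### Auxiliary arithmetic lemmas -/

lemma vg_choose_fact_expand (t : ℕ) :
    (4*t+4).choose (t+1) * ((t+1) * ((3*t+1)*(3*t+2)*(3*t+3))) =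
    (4*t).choose t * ((4*t+1)*(4*t+2)*(4*t+3)*(4*t+4)) := by
  have h1 : (4*t+4).choose (t+1) * (t+1).factorial * (3*t+3).factorial = (4*t+4).factorial := by
    have := Nat.choose_mul_factorial_mul_factorial (show t+1 ≤ 4*t+4 by omega)
    have e : 4*t+4 - (t+1) = 3*t+3 := by omega
    rwa [e] at this
  have h2 : (4*t).choose t * t.factorial * (3*t).factorial = (4*t).factorial := by
    have := Nat.choose_mul_factorial_mul_factorial (show t ≤ 4*t by omega)
    have e : 4*t - t = 3*t := by omega
    rwa [e] at this
  have e1 : (t+1).factorial = (t+1) * t.factorial := Nat.factorial_succ t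
  have e2 : (3*t+3).factorial = (3*t+3) * ((3*t+2) * ((3*t+1) * (3*t).factorial)) := by
    have a : (3*t+3).factorial = (3*t+3) * (3*t+2).factorial := Nat.factorial_succ (3*t+2)
    have b : (3*t+2).factorial = (3*t+2) * (3*t+1).factorial := Nat.factorial_succ (3*t+1)
    have c : (3*t+1).factorial = (3*t+1) * (3*t).factorial := Nat.factorial_succ (3*t)
    rw [a, b, c]
  have e3 : (4*t+4).factorial = (4*t+4) * ((4*t+3) * ((4*t+2) * ((4*t+1) * (4*t).factorial))) := by
    have a : (4*t+4).factorial = (4*t+4) * (4*t+3).factorial := Nat.factorial_succ (4*t+3)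
    have b : (4*t+3).factorial = (4*t+3) * (4*t+2).factorial := Nat.factorial_succ (4*t+2)
    have c : (4*t+2).factorial = (4*t+2) * (4*t+1).factorial := Nat.factorial_succ (4*t+1)
    have d : (4*t+1).factorial = (4*t+1) * (4*t).factorial := Nat.factorial_succ (4*t)
    rw [a, b, c, d]
  have key : ((4*t+4).choose (t+1) * ((t+1) * ((3*t+1)*(3*t+2)*(3*t+3)))) * (t.factorial * (3*t).factorial)
      = ((4*t).choose t * ((4*t+1)*(4*t+2)*(4*t+3)*(4*t+4))) * (t.factorial * (3*t).factorial) := by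
    calc ((4*t+4).choose (t+1) * ((t+1) * ((3*t+1)*(3*t+2)*(3*t+3)))) * (t.factorial * (3*t).factorial)
        = ((4*t+4).choose (t+1) * ((t+1) * t.factorial)) * ((3*t+3) * ((3*t+2) * ((3*t+1) * (3*t).factorial))) := by ring
      _ = ((4*t+4).choose (t+1) * (t+1).factorial) * (3*t+3).factorial := by rw [e1, e2]
      _ = (4*t+4).factorial := h1
      _ = (4*t+4) * ((4*t+3) * ((4*t+2) * ((4*t+1) * (4*t).factorial))) := e3
      _ = ((4*t).choose t * t.factorial * (3*t).factorial) * ((4*t+1)*(4*t+2)*(4*t+3)*(4*t+4)) := by rw [h2]; ring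
      _ = ((4*t).choose t * ((4*t+1)*(4*t+2)*(4*t+3)*(4*t+4))) * (t.factorial * (3*t).factorial) := by ring
  exact Nat.eq_of_mul_eq_mul_right (by positivity) key

lemma vg_choose_ratio (t : ℕ) : 27 * (4*t+4).choose (t+1) ≤ 256 * (4*t).choose t := by
  have h := vg_choose_fact_expand t
  have key : (27 * (4*t+4).choose (t+1)) * ((t+1) * ((3*t+1)*(3*t+2)*(3*t+3)))
      ≤ (256 * (4*t).choose t) * ((t+1) * ((3*t+1)*(3*t+2)*(3*t+3))) := by
    have hin : 27 * ((4*t+1)*(4*t+2)*(4*t+3)) ≤ 64 * ((3*t+1)*(3*t+2)*(3*t+3)) := by nlinarith [sq_nonneg t]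
    calc (27 * (4*t+4).choose (t+1)) * ((t+1) * ((3*t+1)*(3*t+2)*(3*t+3)))
        = 27 * ((4*t).choose t * ((4*t+1)*(4*t+2)*(4*t+3)*(4*t+4))) := by rw [← h]; ring
      _ = ((4*t).choose t * ((t+1) * 4)) * (27 * ((4*t+1)*(4*t+2)*(4*t+3))) := by ring
      _ ≤ ((4*t).choose t * ((t+1) * 4)) * (64 * ((3*t+1)*(3*t+2)*(3*t+3))) :=
          Nat.mul_le_mul_left _ hin
      _ = (256 * (4*t).choose t) * ((t+1) * ((3*t+1)*(3*t+2)*(3*t+3))) := by ring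
  exact Nat.le_of_mul_le_mul_right key (by positivity)

lemma vg_lemA : ∀ t : ℕ, ((4*t).choose t)^5 * 5^(4*t) ≤ 2^(30*t) := by
  intro t
  induction t with
  | zero => simp
  | succ t ih =>
    have hr := vg_choose_ratio t
    have h5 : (27 * (4*t+4).choose (t+1))^5 ≤ (256 * (4*t).choose t)^5 := Nat.pow_le_pow_left hr 5
    have key : ((4*(t+1)).choose (t+1))^5 * 5^(4*(t+1)) * 27^5
        ≤ 2^(30*(t+1)) * 27^5 := by
      calc ((4*(t+1)).choose (t+1))^5 * 5^(4*(t+1)) * 27^5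
          = (27 * (4*t+4).choose (t+1))^5 * 5^(4*t) * 5^4 := by ring_nf
        _ ≤ (256 * (4*t).choose t)^5 * 5^(4*t) * 5^4 := by
            exact Nat.mul_le_mul_right _ (Nat.mul_le_mul_right _ h5)
        _ = (256^5 * 5^4) * (((4*t).choose t)^5 * 5^(4*t)) := by ring
        _ ≤ (256^5 * 5^4) * 2^(30*t) := Nat.mul_le_mul_left _ ih
        _ ≤ (27^5 * 2^30) * 2^(30*t) := by
            have : (256:ℕ)^5 * 5^4 ≤ 27^5 * 2^30 := by norm_num
            exact Nat.mul_le_mul_right _ this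
        _ = 2^(30*(t+1)) * 27^5 := by ring
    exact Nat.le_of_mul_le_mul_right key (by positivity)

lemma vg_choose_step (n t : ℕ) (h : 4*t ≤ n) : 3 * ((n+1).choose t) ≤ 4 * (n.choose t) := by
  rcases Nat.eq_zero_or_pos t with rfl | ht
  · simp
  · obtain ⟨k, rfl⟩ : ∃ k, t = k + 1 := ⟨t - 1, by omega⟩
    have pascal : (n+1).choose (k+1) = n.choose k + n.choose (k+1) := Nat.choose_succ_succ n k
    have hid : n.choose (k+1) * (k+1) = n.choose k * (n - k) := Nat.choose_succ_right_eq n k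
    have h3 : 3 * (n.choose k) * (k+1) ≤ n.choose (k+1) * (k+1) := by
      rw [hid]
      have hnk : 3 * (k+1) ≤ n - k := by omega
      calc 3 * (n.choose k) * (k+1) = n.choose k * (3 * (k+1)) := by ring
        _ ≤ n.choose k * (n - k) := Nat.mul_le_mul_left _ hnk
    have h3' : 3 * (n.choose k) ≤ n.choose (k+1) := Nat.le_of_mul_le_mul_right h3 (by omega)
    calc 3 * ((n+1).choose (k+1)) = 3 * (n.choose k) + 3 * (n.choose (k+1)) := by rw [pascal]; ring
      _ ≤ n.choose (k+1) + 3 * (n.choose (k+1)) := by omega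
      _ = 4 * (n.choose (k+1)) := by ring

lemma vg_choose_ext (t : ℕ) : ∀ r : ℕ, ((4*t+r).choose t) * 3^r ≤ ((4*t).choose t) * 4^r := by
  intro r
  induction r with
  | zero => simp
  | succ r ih =>
    have hs := vg_choose_step (4*t+r) t (by omega)
    calc ((4*t+(r+1)).choose t) * 3^(r+1) = (3 * ((4*t+r+1).choose t)) * 3^r := by
          rw [show 4*t+(r+1) = 4*t+r+1 by omega]; ring
      _ ≤ (4 * ((4*t+r).choose t)) * 3^r := Nat.mul_le_mul_right _ hs
      _ = 4 * (((4*t+r).choose t) * 3^r) := by ring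
      _ ≤ 4 * (((4*t).choose t) * 4^r) := Nat.mul_le_mul_left _ ih
      _ = ((4*t).choose t) * 4^(r+1) := by ring

lemma vg_lemB (s : ℕ) : (s.choose (s/4))^5 * 5^s ≤ 2^(10*(s - s/4)) := by
  set t := s/4 with ht
  set r := s % 4 with hr
  have hs : s = 4*t + r := by omega
  have hext : (s.choose t) * 3^r ≤ ((4*t).choose t) * 4^r := by rw [hs]; exact vg_choose_ext t r
  have hA := vg_lemA t
  have h5 : ((s.choose t) * 3^r)^5 ≤ (((4*t).choose t) * 4^r)^5 := Nat.pow_le_pow_left hext 5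
  have e1 : (4:ℕ)^(5*r) * 5^r = 5120^r := by rw [pow_mul, ← mul_pow]; norm_num
  have e2 : (2:ℕ)^(10*r) * 3^(5*r) = 248832^r := by rw [pow_mul, pow_mul, ← mul_pow]; norm_num
  have key : (s.choose t)^5 * 5^s * (3^r)^5 ≤ 2^(10*(s-t)) * (3^r)^5 := by
    have hst : s - t = 3*t + r := by omega
    calc (s.choose t)^5 * 5^s * (3^r)^5
        = ((s.choose t) * 3^r)^5 * (5^(4*t) * 5^r) := by rw [hs]; ring
      _ ≤ (((4*t).choose t) * 4^r)^5 * (5^(4*t) * 5^r) := Nat.mul_le_mul_right _ h5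
      _ = (((4*t).choose t)^5 * 5^(4*t)) * (4^(5*r) * 5^r) := by ring
      _ ≤ 2^(30*t) * (4^(5*r) * 5^r) := Nat.mul_le_mul_right _ hA
      _ = 2^(30*t) * 5120^r := by rw [e1]
      _ ≤ 2^(30*t) * 248832^r := Nat.mul_le_mul_left _ (Nat.pow_le_pow_left (by norm_num) r)
      _ = 2^(30*t) * (2^(10*r) * 3^(5*r)) := by rw [e2]
      _ = 2^(10*(s-t)) * (3^r)^5 := by
          rw [hst, show 10*(3*t+r) = 30*t + 10*r by ring, pow_add]
          ring
  exact Nat.le_of_mul_le_mul_right key (by positivity)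

/-! ### Counting: Hamming balls and greedy codes -/

lemma vg_ball_bound (s q t : ℕ) (hts : t ≤ s) (c : Fin s → Fin q) :
    #((univ : Finset (Fin s → Fin q)).filter fun f => hammingDist c f ≤ t) ≤ s.choose t * q ^ t := by
  classical
  have hsub : ((univ : Finset (Fin s → Fin q)).filter fun f => hammingDist c f ≤ t) ⊆
      (Finset.powersetCard t (univ : Finset (Fin s))).biUnion
        (fun D => (univ : Finset (Fin s → Fin q)).filter fun f => ∀ i ∉ D, f i = c i) := by
    intro f hf
    simp only [mem_filter, mem_univ, true_and] at hf
    obtain ⟨D, hD0, hDcard⟩ := Finset.exists_superset_card_eq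
      (show #(univ.filter fun i => c i ≠ f i) ≤ t from hf)
      (by simpa using hts)
    refine Finset.mem_biUnion.mpr ⟨D, ?_, ?_⟩
    · exact Finset.mem_powersetCard_univ.mpr hDcard
    · simp only [mem_filter, mem_univ, true_and]
      intro i hi
      by_contra hne
      exact hi (hD0 (by simp [hne]; exact fun h => hne h.symm))
  calc #((univ : Finset (Fin s → Fin q)).filter fun f => hammingDist c f ≤ t)
      ≤ ∑ D ∈ Finset.powersetCard t (univ : Finset (Fin s)),
          #((univ : Finset (Fin s → Fin q)).filter fun f => ∀ i ∉ D, f i = c i) :=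
        le_trans (Finset.card_le_card hsub) Finset.card_biUnion_le
    _ ≤ ∑ D ∈ Finset.powersetCard t (univ : Finset (Fin s)), q ^ t := by
        refine Finset.sum_le_sum ?_
        intro D hD
        have hDcard : #D = t := Finset.mem_powersetCard_univ.mp hD
        have hle : #((univ : Finset (Fin s → Fin q)).filter fun f => ∀ i ∉ D, f i = c i)
            ≤ #(univ : Finset ((i : D) → Fin q)) := by
          apply Finset.card_le_card_of_injOn (fun f => fun i => f i) (fun _ _ => mem_univ _)
          intro f hf g hg hfg
          simp only [coe_filter, Set.mem_setOf_eq, mem_univ, true_and] at hf hg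
          funext i
          by_cases hi : i ∈ D
          · exact congrFun hfg ⟨i, hi⟩
          · rw [hf i hi, hg i hi]
        refine le_trans hle ?_
        rw [Finset.card_univ, Fintype.card_pi]
        simp [hDcard]
    _ = s.choose t * q ^ t := by
        rw [Finset.sum_const, Finset.card_powersetCard, Finset.card_univ, Fintype.card_fin,
          smul_eq_mul]

lemma vg_exists_code (s q t : ℕ) (hq : 1 ≤ q) (hts : t ≤ s) :
    ∃ C : Finset (Fin s → Fin q), C.Nonempty ∧
      (∀ f ∈ C, ∀ g ∈ C, f ≠ g → t + 1 ≤ hammingDist f g) ∧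
      q ^ s ≤ #C * (s.choose t * q ^ t) := by
  classical
  haveI : Nonempty (Fin q) := ⟨⟨0, hq⟩⟩
  set P : Finset (Fin s → Fin q) → Prop :=
    fun C => ∀ f ∈ C, ∀ g ∈ C, f ≠ g → t + 1 ≤ hammingDist f g with hP
  have hSne : ((univ : Finset (Finset (Fin s → Fin q))).filter P).Nonempty := by
    refine ⟨∅, ?_⟩
    simp [hP]
  obtain ⟨C, hCmem, hCmax⟩ := Finset.exists_max_image _ Finset.card hSne
  have hCP : P C := (Finset.mem_filter.mp hCmem).2
  have hCne : C.Nonempty := by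
    by_contra hne
    rw [Finset.not_nonempty_iff_eq_empty] at hne
    obtain ⟨f0⟩ : Nonempty (Fin s → Fin q) := inferInstance
    have hmem : ({f0} : Finset (Fin s → Fin q)) ∈ (univ : Finset (Finset (Fin s → Fin q))).filter P := by
      simp only [Finset.mem_filter, Finset.mem_univ, true_and, hP]
      intro f hf g hg hfg
      simp only [Finset.mem_singleton] at hf hg
      exact absurd (hf.trans hg.symm) hfg
    have := hCmax _ hmem
    simp [hne] at this
  have hcov : ∀ f : Fin s → Fin q, ∃ c ∈ C, hammingDist c f ≤ t := by
    intro f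
    by_contra hnc
    push_neg at hnc
    have hfC : f ∉ C := by
      intro hfC
      have := hnc f hfC
      simp at this
    have hmem : insert f C ∈ (univ : Finset (Finset (Fin s → Fin q))).filter P := by
      simp only [Finset.mem_filter, Finset.mem_univ, true_and, hP]
      intro a ha b hb hab
      rcases Finset.mem_insert.mp ha with rfl | ha'
      · rcases Finset.mem_insert.mp hb with rfl | hb'
        · exact absurd rfl hab
        · rw [hammingDist_comm]
          exact hnc b hb'
      · rcases Finset.mem_insert.mp hb with rfl | hb'
        · exact hnc a ha'
        · exact hCP a ha' b hb' hab
    have hle := hCmax _ hmem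
    rw [Finset.card_insert_of_notMem hfC] at hle
    omega
  refine ⟨C, hCne, hCP, ?_⟩
  calc q ^ s = #(univ : Finset (Fin s → Fin q)) := by
        rw [Finset.card_univ]; simp [Fintype.card_fun]
    _ ≤ #(C.biUnion fun c => (univ : Finset (Fin s → Fin q)).filter fun f => hammingDist c f ≤ t) := by
        apply Finset.card_le_card
        intro f _
        obtain ⟨c, hc, hdist⟩ := hcov f
        exact Finset.mem_biUnion.mpr ⟨c, hc, by simp [hdist]⟩
    _ ≤ ∑ c ∈ C, #((univ : Finset (Fin s → Fin q)).filter fun f => hammingDist c f ≤ t) :=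
        Finset.card_biUnion_le
    _ ≤ ∑ c ∈ C, s.choose t * q ^ t := Finset.sum_le_sum fun c _ => vg_ball_bound s q t hts c
    _ = #C * (s.choose t * q ^ t) := by rw [Finset.sum_const, smul_eq_mul]

/-! ### Embedding codewords as sparse binary vectors -/

/-- position of the `a`-th one for codeword `f` -/
def vgPos {s q m : ℕ} (hm : s * q ≤ m) (f : Fin s → Fin q) (a : Fin s) : Fin m :=
  ⟨(a : ℕ) * q + (f a : ℕ), by
    have h1 : (a : ℕ) * q + (f a : ℕ) < ((a : ℕ) + 1) * q := by
      have := (f a).isLt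
      nlinarith
    have h2 : ((a : ℕ) + 1) * q ≤ s * q := Nat.mul_le_mul_right q a.isLt
    omega⟩

lemma vgPos_inj {s q m : ℕ} (hm : s * q ≤ m) {f g : Fin s → Fin q} {a b : Fin s}
    (h : vgPos hm f a = vgPos hm g b) : a = b ∧ f a = g b := by
  have hq : 0 < q := (f a).pos
  have hval : (a : ℕ) * q + (f a : ℕ) = (b : ℕ) * q + (g b : ℕ) := congrArg Fin.val h
  have hfa := (f a).isLt
  have hgb := (g b).isLt
  have hab : (a : ℕ) = (b : ℕ) := by
    have h1 : ((a : ℕ) * q + (f a : ℕ)) / q = a := by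
      rw [add_comm, Nat.add_mul_div_right _ _ hq, Nat.div_eq_of_lt hfa]; omega
    have h2 : ((b : ℕ) * q + (g b : ℕ)) / q = b := by
      rw [add_comm, Nat.add_mul_div_right _ _ hq, Nat.div_eq_of_lt hgb]; omega
    rw [← h1, ← h2, hval]
  have habq : (a : ℕ) * q = (b : ℕ) * q := by rw [hab]
  refine ⟨Fin.ext hab, Fin.ext ?_⟩
  omega

def vgEmb {s q m : ℕ} (hm : s * q ≤ m) (f : Fin s → Fin q) : Fin m → Bool :=
  fun k => decide (k ∈ Finset.image (vgPos hm f) univ)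

lemma vgEmb_card {s q m : ℕ} (hm : s * q ≤ m) (f : Fin s → Fin q) :
    #(univ.filter fun j => vgEmb hm f j = true) = s := by
  have heq : (univ.filter fun j => vgEmb hm f j = true) = Finset.image (vgPos hm f) univ := by
    ext k
    simp [vgEmb]
  rw [heq, Finset.card_image_of_injective _ (fun a b hab => (vgPos_inj hm hab).1),
    Finset.card_univ, Fintype.card_fin]

lemma vgEmb_dist {s q m : ℕ} (hm : s * q ≤ m) (f g : Fin s → Fin q) :
    2 * hammingDist f g ≤ hammingDist (vgEmb hm f) (vgEmb hm g) := by
  classical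
  set D : Finset (Fin s) := univ.filter fun a => f a ≠ g a with hD
  set A : Finset (Fin m) := D.image (vgPos hm f) with hA
  set B : Finset (Fin m) := D.image (vgPos hm g) with hB
  have memim : ∀ (h : Fin s → Fin q) (k : Fin m), vgEmb hm h k = true ↔ ∃ a, vgPos hm h a = k := by
    intro h k
    simp [vgEmb]
  have hAW : ∀ k ∈ A, vgEmb hm f k = true ∧ vgEmb hm g k = false := by
    intro k hk
    obtain ⟨a, haD, hak⟩ := Finset.mem_image.mp hk
    have haD' : f a ≠ g a := by simpa [hD] using haD
    constructor
    · rw [memim]; exact ⟨a, hak⟩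
    · rw [← Bool.not_eq_true, memim]
      rintro ⟨b, hbk⟩
      obtain ⟨rfl, hfb⟩ := vgPos_inj hm (hbk.trans hak.symm)
      exact haD' hfb.symm
  have hBW : ∀ k ∈ B, vgEmb hm g k = true ∧ vgEmb hm f k = false := by
    intro k hk
    obtain ⟨a, haD, hak⟩ := Finset.mem_image.mp hk
    have haD' : f a ≠ g a := by simpa [hD] using haD
    constructor
    · rw [memim]; exact ⟨a, hak⟩
    · rw [← Bool.not_eq_true, memim]
      rintro ⟨b, hbk⟩
      obtain ⟨rfl, hfb⟩ := vgPos_inj hm (hbk.trans hak.symm)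
      exact haD' hfb
  have hdisj : Disjoint A B := by
    rw [Finset.disjoint_left]
    intro k hkA hkB
    exact absurd (hBW k hkB).1 (by simp [(hAW k hkA).2])
  have hsub : A ∪ B ⊆ univ.filter fun k => vgEmb hm f k ≠ vgEmb hm g k := by
    intro k hk
    rcases Finset.mem_union.mp hk with hk | hk
    · simp [(hAW k hk).1, (hAW k hk).2]
    · simp [(hBW k hk).1, (hBW k hk).2]
  have hcardA : #A = #D := Finset.card_image_of_injective _ (fun a b hab => (vgPos_inj hm hab).1)
  have hcardB : #B = #D := Finset.card_image_of_injective _ (fun a b hab => (vgPos_inj hm hab).1)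
  have hDdist : #D = hammingDist f g := rfl
  calc 2 * hammingDist f g = #A + #B := by rw [hcardA, hcardB, hDdist]; ring
    _ = #(A ∪ B) := (Finset.card_union_of_disjoint hdisj).symm
    _ ≤ #(univ.filter fun k => vgEmb hm f k ≠ vgEmb hm g k) := Finset.card_le_card hsub
    _ = hammingDist (vgEmb hm f) (vgEmb hm g) := rfl

/-- Sparse Varshamov–Gilbert bound (Massart 2007, Lemma 4.10, specialized):
for integers `m > s ≥ 1` with `s ≤ m/4`, there exist binary vectors
`ω_0, ..., ω_M` each with exactly `s` ones, pairwise Hamming distance `> s/2`,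
and `log(M+1) ≥ (s/5) log(m/s)`. -/
theorem sparse_varshamov_gilbert (m s : ℕ) (hs : 1 ≤ s) (hsm : s < m)
    (hs4 : (s : ℝ) ≤ (m : ℝ) / 4) :
    ∃ (M : ℕ) (ω : Fin (M + 1) → (Fin m → Bool)),
      (∀ i, #{j | ω i j = true} = s) ∧
      (∀ i j, i ≠ j → (s : ℝ) / 2 < (hammingDist (ω i) (ω j) : ℝ)) ∧
      (s : ℝ) / 5 * Real.log ((m : ℝ) / s) ≤ Real.log (M + 1) := by
  classical
  set q := m / s with hqdef
  set t := s / 4 with htdef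
  have h4s : 4 * s ≤ m := by
    have h : ((4 * s : ℕ) : ℝ) ≤ (m : ℝ) := by push_cast; linarith
    exact_mod_cast h
  have hq4 : 4 ≤ q := (Nat.le_div_iff_mul_le hs).mpr (by omega)
  have hq1 : 1 ≤ q := by omega
  have hts : t ≤ s := Nat.div_le_self s 4
  have h4t : 4 * t ≤ s := by omega
  have hst3 : s ≤ 4 * t + 3 := by omega
  have hm : s * q ≤ m := by rw [hqdef, mul_comm]; exact Nat.div_mul_le_self m s
  obtain ⟨C, hCne, hCdist, hCcount⟩ := vg_exists_code s q t hq1 hts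
  set N := #C with hNdef
  have hN1 : 1 ≤ N := Finset.card_pos.mpr hCne
  refine ⟨N - 1, ?_⟩
  have hNM : N - 1 + 1 = N := by omega
  have e : Fin (N - 1 + 1) ≃ {x // x ∈ C} := (finCongr hNM).trans C.equivFin.symm
  refine ⟨fun i => vgEmb hm ((e i) : Fin s → Fin q), ?_, ?_, ?_⟩
  · intro i
    exact vgEmb_card hm _
  · intro i j hij
    have hne : ((e i) : Fin s → Fin q) ≠ ((e j) : Fin s → Fin q) := by
      intro hcontr
      exact hij (e.injective (Subtype.ext hcontr))
    have hd : t + 1 ≤ hammingDist ((e i) : Fin s → Fin q) ((e j) : Fin s → Fin q) :=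
      hCdist _ (e i).2 _ (e j).2 hne
    have hd2 := vgEmb_dist hm ((e i) : Fin s → Fin q) ((e j) : Fin s → Fin q)
    have hnat : s < 2 * hammingDist (vgEmb hm ((e i) : Fin s → Fin q)) (vgEmb hm ((e j) : Fin s → Fin q)) := by
      omega
    have : (s : ℝ) < 2 * (hammingDist (vgEmb hm ((e i) : Fin s → Fin q)) (vgEmb hm ((e j) : Fin s → Fin q)) : ℝ) := by
      exact_mod_cast hnat
    linarith
  · -- the counting estimate
    have hchoose1 : 1 ≤ s.choose t := Nat.choose_pos hts
    have hqt1 : 1 ≤ q ^ t := Nat.one_le_pow _ _ (by omega)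
    set Bl := s.choose t * q ^ t with hBl
    have hB1 : 1 ≤ Bl := Nat.one_le_iff_ne_zero.mpr (by positivity)
    -- claim : (q+1)^s * Bl^5 ≤ q^(5*s)
    have claim : (q+1)^s * Bl^5 ≤ q^(5*s) := by
      have hu5 : 5 * t ≤ 4 * s := by omega
      set u := 4*s - 5*t with hu
      have key : 4^s * ((q+1)^s * Bl^5) ≤ 4^s * q^(5*s) := by
        calc 4^s * ((q+1)^s * Bl^5)
            = (4*(q+1))^s * ((s.choose t)^5 * q^(5*t)) := by
              rw [hBl, mul_pow, mul_pow, ← pow_mul]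
              ring
          _ ≤ (5*q)^s * ((s.choose t)^5 * q^(5*t)) := by
              refine Nat.mul_le_mul_right _ (Nat.pow_le_pow_left (by omega) s)
          _ = ((s.choose t)^5 * 5^s) * (q^s * q^(5*t)) := by rw [mul_pow]; ring
          _ ≤ 2^(10*(s-t)) * (q^s * q^(5*t)) := Nat.mul_le_mul_right _ (vg_lemB s)
          _ = 4^s * (4^u * q^(s + 5*t)) := by
              rw [show (2:ℕ)^(10*(s-t)) = 4^(5*(s-t)) by rw [show (4:ℕ) = 2^2 from rfl, ← pow_mul]; ring_nf,
                show 5*(s-t) = s + u by omega, pow_add, ← pow_add]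
              ring
          _ ≤ 4^s * (q^u * q^(s + 5*t)) :=
              Nat.mul_le_mul_left _ (Nat.mul_le_mul_right _ (Nat.pow_le_pow_left (by omega) u))
          _ = 4^s * q^(5*s) := by rw [← pow_add, show u + (s + 5*t) = 5*s by omega]
      exact Nat.le_of_mul_le_mul_left key (by positivity)
    have hmain : (q+1)^s ≤ N^5 := by
      have h1 : (q+1)^s * Bl^5 ≤ N^5 * Bl^5 := by
        calc (q+1)^s * Bl^5 ≤ q^(5*s) := claim
          _ = (q^s)^5 := by rw [← pow_mul]; ring_nf
          _ ≤ (N * Bl)^5 := Nat.pow_le_pow_left hCcount 5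
          _ = N^5 * Bl^5 := mul_pow N Bl 5
      exact Nat.le_of_mul_le_mul_right h1 (by positivity)
    -- now the real-number estimate
    have hspos : (0:ℝ) < s := by exact_mod_cast hs
    have hmpos : (0:ℝ) < m := by
      have : 0 < m := by omega
      exact_mod_cast this
    have hdivpos : (0:ℝ) < (m:ℝ)/s := by positivity
    have hms : (m:ℝ)/s ≤ (q:ℝ) + 1 := by
      have hnat : m < s * (q + 1) := by
        have h1 : m % s < s := Nat.mod_lt m hs
        have h2 : s * (m / s) + m % s = m := Nat.div_add_mod m s
        have h3 : s * (m / s + 1) = s * (m / s) + s := Nat.mul_succ s (m / s)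
        rw [hqdef]
        omega
      rw [div_le_iff₀ hspos]
      have : (m:ℝ) < (s:ℝ) * ((q:ℝ) + 1) := by exact_mod_cast hnat
      linarith
    have hlog1 : Real.log ((m:ℝ)/s) ≤ Real.log ((q:ℝ)+1) := Real.log_le_log hdivpos hms
    have hcast : (((q+1)^s : ℕ) : ℝ) ≤ ((N^5 : ℕ) : ℝ) := by exact_mod_cast hmain
    have hlog2 : Real.log (((q:ℝ)+1)^s) ≤ Real.log ((N:ℝ)^5) := by
      apply Real.log_le_log (by positivity)
      push_cast at hcast
      exact_mod_cast hcast
    rw [Real.log_pow, Real.log_pow] at hlog2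
    have hNlog : ((N - 1 : ℕ) : ℝ) + 1 = (N : ℝ) := by
      have : ((N - 1 + 1 : ℕ) : ℝ) = (N : ℝ) := by exact_mod_cast congrArg Nat.cast hNM
      push_cast at this ⊢
      linarith
    rw [hNlog]
    have hlogq1 : 0 ≤ Real.log ((q:ℝ)+1) := by
      apply Real.log_nonneg
      have : (1:ℝ) ≤ (q:ℝ) := by exact_mod_cast hq1
      linarith
    calc (s : ℝ) / 5 * Real.log ((m : ℝ) / s)
        ≤ (s : ℝ) / 5 * Real.log ((q:ℝ)+1) := by
          apply mul_le_mul_of_nonneg_left hlog1 (by positivity)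
      _ = (1/5) * ((s:ℝ) * Real.log ((q:ℝ)+1)) := by ring
      _ ≤ (1/5) * ((5:ℝ) * Real.log (N:ℝ)) := by
          apply mul_le_mul_of_nonneg_left _ (by norm_num)
          exact_mod_cast hlog2
      _ = Real.log (N:ℝ) := by ring
end

section
/- Let g(x) = φ(x)(φ(x) - x·Φ(-x)) where φ and Φ are the standard normal density and CDF. For any ξ ≥ 0 and any β ∈ [0, π/2), the integral L(β) := ∫_0^∞ φ(x)(Φ(ξ + x·tan β) - Φ(ξ - x·tan β)) dx satisfies L(β) ≤ (1/π)·tan β. -/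
open MeasureTheory Real

noncomputable def stdPhi (x : ℝ) : ℝ := Real.exp (-x ^ 2 / 2) / Real.sqrt (2 * Real.pi)

noncomputable def stdCdf (x : ℝ) : ℝ := ∫ t in Set.Iic x, stdPhi t

/-! Since `φ ≤ 1/√(2π)`, the CDF is `1/√(2π)`-Lipschitz, so for `x > 0` the integrand is at most
`φ(x) · 2x tan β / √(2π) = (tan β / π) · x e^{-x²/2}`, whose integral over `(0, ∞)` is `tan β / π`. -/

lemma integral_Ioi_mul_exp_neg_mul_sq {b : ℝ} (hb : 0 < b) :
    ∫ x in Set.Ioi (0 : ℝ), x * exp (-b * x ^ 2) = (2 * b)⁻¹ := by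
  have h := integral_mul_cexp_neg_mul_sq (b := (b : ℂ)) (by simpa using hb)
  rw [← Complex.ofReal_inj, ← integral_complex_ofReal]
  push_cast
  exact h

lemma stdPhi_nonneg (x : ℝ) : 0 ≤ stdPhi x := by
  unfold stdPhi
  positivity

lemma stdPhi_le_one_div_sqrt (x : ℝ) : stdPhi x ≤ 1 / sqrt (2 * π) := by
  unfold stdPhi
  gcongr
  rw [exp_le_one_iff]
  nlinarith [sq_nonneg x]

lemma integrable_stdPhi : Integrable stdPhi := by
  refine ((integrable_exp_neg_mul_sq (by norm_num : (0 : ℝ) < 1 / 2)).div_const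
    (sqrt (2 * π))).congr (Filter.Eventually.of_forall fun x => ?_)
  simp only [stdPhi]
  ring_nf

lemma stdCdf_sub_stdCdf (a b : ℝ) : stdCdf b - stdCdf a = ∫ t in a..b, stdPhi t :=
  intervalIntegral.integral_Iic_sub_Iic integrable_stdPhi.integrableOn
    integrable_stdPhi.integrableOn

lemma stdCdf_monotone : Monotone stdCdf := fun a b hab => by
  rw [← sub_nonneg, stdCdf_sub_stdCdf]
  exact intervalIntegral.integral_nonneg hab fun t _ => stdPhi_nonneg t

lemma abs_stdCdf_sub_le (a b : ℝ) : |stdCdf b - stdCdf a| ≤ |b - a| / sqrt (2 * π) := by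
  rw [stdCdf_sub_stdCdf, ← Real.norm_eq_abs, div_eq_mul_inv, mul_comm, ← one_div]
  refine intervalIntegral.norm_integral_le_of_norm_le_const fun t _ => ?_
  rw [Real.norm_of_nonneg (stdPhi_nonneg t)]
  exact stdPhi_le_one_div_sqrt t

lemma stdPhi_mul_stdCdf_sub_le (ξ : ℝ) {t x : ℝ} (ht : 0 ≤ t) (hx : 0 ≤ x) :
    stdPhi x * (stdCdf (ξ + x * t) - stdCdf (ξ - x * t)) ≤ t / π * (x * exp (-(1 / 2) * x ^ 2)) :=
  calc stdPhi x * (stdCdf (ξ + x * t) - stdCdf (ξ - x * t))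
      ≤ stdPhi x * (2 * x * t / sqrt (2 * π)) := by
        gcongr
        · exact stdPhi_nonneg x
        refine (le_abs_self _).trans ((abs_stdCdf_sub_le _ _).trans_eq ?_)
        rw [show ξ + x * t - (ξ - x * t) = 2 * x * t by ring, abs_of_nonneg (by positivity)]
    _ = t / π * (x * exp (-(1 / 2) * x ^ 2)) := by
        have hsqrt : sqrt (2 * π) ^ 2 = 2 * π := sq_sqrt (by positivity)
        unfold stdPhi
        field_simp
        rw [hsqrt]
        ring_nf

theorem cluster_loss_integral_upper_general (ξ β : ℝ)
    (hβ0 : 0 ≤ β) (hβ : β < Real.pi / 2) :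
    (∫ x in Set.Ioi (0 : ℝ),
        stdPhi x * (stdCdf (ξ + x * Real.tan β) - stdCdf (ξ - x * Real.tan β)))
      ≤ Real.tan β / Real.pi := by
  have ht : 0 ≤ tan β := tan_nonneg_of_nonneg_of_le_pi_div_two hβ0 hβ.le
  have hhalf : (0 : ℝ) < 1 / 2 := by norm_num
  calc (∫ x in Set.Ioi (0 : ℝ), stdPhi x * (stdCdf (ξ + x * tan β) - stdCdf (ξ - x * tan β)))
      ≤ ∫ x in Set.Ioi (0 : ℝ), tan β / π * (x * exp (-(1 / 2) * x ^ 2)) := by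
        refine integral_mono_of_nonneg ?_
          ((integrable_mul_exp_neg_mul_sq hhalf).const_mul _).integrableOn ?_
        all_goals
          refine (ae_restrict_iff' measurableSet_Ioi).2 (Filter.Eventually.of_forall fun x hx => ?_)
        · exact mul_nonneg (stdPhi_nonneg x) (sub_nonneg.2 (stdCdf_monotone (by nlinarith [hx.out])))
        · exact stdPhi_mul_stdCdf_sub_le ξ ht hx.out.le
    _ = tan β / π := by
        rw [integral_const_mul, integral_Ioi_mul_exp_neg_mul_sq hhalf]
        norm_num

/-- Upper bound on the misclustering integral:
`∫_0^∞ φ(x)(Φ(ξ + x tan β) - Φ(ξ - x tan β)) dx ≤ (1/π) tan β`. -/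
theorem cluster_loss_integral_upper (ξ β : ℝ) (hξ : 0 ≤ ξ)
    (hβ0 : 0 ≤ β) (hβ : β < Real.pi / 2) :
    (∫ x in Set.Ioi (0 : ℝ),
        stdPhi x * (stdCdf (ξ + x * Real.tan β) - stdCdf (ξ - x * Real.tan β)))
      ≤ Real.tan β / Real.pi :=
  cluster_loss_integral_upper_general ξ β hβ0 hβ
end
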